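/- arXiv:1606.05736 — 3 statements merged into one kernel-verified Lean document; each statement's English description precedes it below -/
import Mathlib

section
/- Let T be a densely defined closed positive operator on a complex Hilbert space H. Then m(T) = inf{⟨Tx, x⟩ : x ∈ D(T), ‖x‖ = 1}, i.e. the minimum modulus of T equals its lower numerical bound m_T. -/
/-!
The inequality `m_T ≤ m(T)` is Cauchy–Schwarz: `⟪T x, x⟫ ≤ ‖T x‖` for unit `x`. Conversely, if
`m(T) > 0` then `T` is bounded below, hence has closed range, and being self-adjoint it is onto.
For a unit `x` pick `w` with `T w = x`; Cauchy–Schwarz for the nonnegative form `⟪T ·, ·⟫` gives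
`1 = ⟪T w, x⟫ ⟪T x, w⟫ ≤ ⟪T w, w⟫ ⟪T x, x⟫ ≤ ‖w‖ ⟪T x, x⟫ ≤ ⟪T x, x⟫ / m(T)`.
-/

open scoped InnerProductSpace

variable {H : Type*} [NormedAddCommGroup H] [InnerProductSpace ℂ H] [CompleteSpace H]

/-- The minimum modulus `m(T) = inf {‖Tx‖ : x ∈ D(T), ‖x‖ = 1}` of a (possibly unbounded)
operator. -/
noncomputable def minMod (T : H →ₗ.[ℂ] H) : ℝ :=
  sInf {r : ℝ | ∃ x : T.domain, ‖(x : H)‖ = 1 ∧ r = ‖T x‖}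

/-- A densely defined operator is positive if it is self-adjoint and `⟨Tx, x⟩ ≥ 0` for all
`x ∈ D(T)`. -/
def IsPositivePMap (T : H →ₗ.[ℂ] H) : Prop :=
  IsSelfAdjoint T ∧ ∀ x : T.domain, 0 ≤ (⟪T x, (x : H)⟫_ℂ).re

open scoped NNReal

namespace LinearPMap

section Closed

variable {R E F : Type*} [CommRing R] [NormedAddCommGroup E] [Module R E] [NormedAddCommGroup F]
  [Module R F] [CompleteSpace E] [CompleteSpace F]

/-- The projection of the (complete) graph onto the second factor is antilipschitz. -/
theorem IsClosed.isClosed_range_of_norm_le_mul {T : E →ₗ.[R] F} (hT : T.IsClosed) {C : ℝ≥0}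
    (hC : ∀ x : T.domain, ‖(x : E)‖ ≤ C * ‖T x‖) : _root_.IsClosed (Set.range T) := by
  have : CompleteSpace T.graph := hT.completeSpace_coe
  let π : T.graph →ₗ[R] F := (LinearMap.snd R E F).comp T.graph.subtype
  have hrange : Set.range π = Set.range T := by
    rw [← LinearMap.coe_range, LinearMap.range_comp, Submodule.range_subtype,
      graph_map_snd_eq_range, LinearMap.coe_range]
    rfl
  have hbound : ∀ p : T.graph, ‖p‖ ≤ max C 1 * ‖π p‖ := by
    rintro ⟨p, hp⟩
    obtain ⟨x, hx, hTx⟩ := (mem_graph_iff T).1 hp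
    have hfst : ‖p.1‖ ≤ C * ‖p.2‖ := hx ▸ hTx ▸ hC x
    simp only [π, LinearMap.comp_apply, Submodule.subtype_apply, LinearMap.snd_apply,
      Submodule.coe_norm, Prod.norm_def, NNReal.coe_max, NNReal.coe_one]
    exact max_le (hfst.trans (by gcongr; exact le_max_left _ _))
      (le_mul_of_one_le_left (norm_nonneg _) (le_max_right _ _))
  exact hrange ▸ (AddMonoidHomClass.antilipschitz_of_bound π hbound).isClosed_range
    (uniformContinuous_snd.comp uniformContinuous_subtype_val)

end Closed

section Adjoint

variable {𝕜 E F : Type*} [RCLike 𝕜] [NormedAddCommGroup E] [InnerProductSpace 𝕜 E]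
  [NormedAddCommGroup F] [InnerProductSpace 𝕜 F] [CompleteSpace E]

theorem exists_adjoint_apply_eq_zero_of_inner_apply_eq_zero {T : E →ₗ.[𝕜] F}
    (hT : Dense (T.domain : Set E)) {z : F} (hz : ∀ x : T.domain, ⟪z, T x⟫_𝕜 = 0) :
    ∃ w : T†.domain, (w : F) = z ∧ T† w = 0 := by
  have hz' : ∀ x : T.domain, ⟪(0 : E), x⟫_𝕜 = ⟪z, T x⟫_𝕜 := by simp [hz]
  exact ⟨⟨z, mem_adjoint_domain_of_exists z ⟨0, hz'⟩⟩, rfl, adjoint_apply_eq hT _ hz'⟩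

theorem _root_.IsSelfAdjoint.isFormalAdjoint {A : E →ₗ.[𝕜] E} (hA : IsSelfAdjoint A) :
    A.IsFormalAdjoint A := by
  simpa only [isSelfAdjoint_def.mp hA] using adjoint_isFormalAdjoint hA.dense_domain

/-- The range is closed by the lower bound, and its orthogonal complement is `ker A† = ker A = 0`. -/
theorem _root_.IsSelfAdjoint.surjective_of_norm_le_mul {A : E →ₗ.[𝕜] E} (hA : IsSelfAdjoint A)
    {C : ℝ≥0} (hC : ∀ x : A.domain, ‖(x : E)‖ ≤ C * ‖A x‖) : Function.Surjective A := by
  set K := LinearMap.range A.toFun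
  have hK : _root_.IsClosed (K : Set E) := by
    rw [LinearMap.coe_range]
    exact hA.isClosed.isClosed_range_of_norm_le_mul hC
  have : CompleteSpace K := hK.completeSpace_coe
  have hKperp : Kᗮ = ⊥ := by
    refine (Submodule.eq_bot_iff _).2 fun z hz => ?_
    have hzA : ∀ x : A.domain, ⟪z, A x⟫_𝕜 = 0 := fun x =>
      (Submodule.mem_orthogonal' K z).1 hz _ (LinearMap.mem_range_self _ x)
    have hker := exists_adjoint_apply_eq_zero_of_inner_apply_eq_zero hA.dense_domain hzA
    rw [isSelfAdjoint_def.mp hA] at hker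
    obtain ⟨w, rfl, hw⟩ := hker
    simpa [hw] using hC w
  intro y
  have hy : y ∈ K := Submodule.orthogonal_eq_bot_iff.1 hKperp ▸ Submodule.mem_top
  exact LinearMap.mem_range.1 hy

end Adjoint

section Form

variable {𝕜 E : Type*} [RCLike 𝕜] [NormedAddCommGroup E] [InnerProductSpace 𝕜 E]

@[reducible]
def IsFormalAdjoint.preInnerProductCore {T : E →ₗ.[𝕜] E} (hT : T.IsFormalAdjoint T)
    (hpos : ∀ x : T.domain, 0 ≤ RCLike.re ⟪T x, (x : E)⟫_𝕜) :
    PreInnerProductSpace.Core 𝕜 T.domain where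
  inner x y := ⟪T x, (y : E)⟫_𝕜
  conj_inner_symm x y := by rw [hT, inner_conj_symm]
  re_inner_nonneg := hpos
  add_left x y z := by simp only [map_add, inner_add_left]
  smul_left x y r := by simp only [map_smul, inner_smul_left]

theorem IsFormalAdjoint.norm_inner_mul_norm_inner_le {T : E →ₗ.[𝕜] E} (hT : T.IsFormalAdjoint T)
    (hpos : ∀ x : T.domain, 0 ≤ RCLike.re ⟪T x, (x : E)⟫_𝕜) (x y : T.domain) :
    ‖⟪T x, (y : E)⟫_𝕜‖ * ‖⟪T y, (x : E)⟫_𝕜‖ ≤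
      RCLike.re ⟪T x, (x : E)⟫_𝕜 * RCLike.re ⟪T y, (y : E)⟫_𝕜 :=
  @InnerProductSpace.Core.inner_mul_inner_self_le 𝕜 _ _ _ _ (hT.preInnerProductCore hpos) x y

end Form

end LinearPMap

theorem sInf_setOf_exists_and_eq {α ι : Type*} [InfSet α] (p : ι → Prop) (f : ι → α) :
    sInf {r | ∃ i, p i ∧ r = f i} = ⨅ i : Subtype p, f i := by
  rw [iInf]
  congr 1
  ext r
  simp [eq_comm]

section MinMod

variable {E : Type*} [NormedAddCommGroup E] [InnerProductSpace ℂ E]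

theorem minMod_nonneg (T : E →ₗ.[ℂ] E) : 0 ≤ minMod T :=
  Real.sInf_nonneg fun _ ⟨_, _, hr⟩ => hr ▸ norm_nonneg _

theorem minMod_mul_norm_le (T : E →ₗ.[ℂ] E) (x : T.domain) : minMod T * ‖(x : E)‖ ≤ ‖T x‖ := by
  rcases eq_or_ne (x : E) 0 with hx | hx
  · simp [hx]
  have hx' : 0 < ‖(x : E)‖ := norm_pos_iff.2 hx
  set u : T.domain := (‖(x : E)‖⁻¹ : ℂ) • x
  have hu : ‖(u : E)‖ = 1 := by
    simp [u, norm_smul, hx'.ne']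
  have hle : minMod T ≤ ‖T u‖ :=
    csInf_le ⟨0, fun _ ⟨_, _, hr⟩ => hr ▸ norm_nonneg _⟩ ⟨u, hu, rfl⟩
  rw [LinearPMap.map_smul, norm_smul] at hle
  rw [mul_comm]
  simpa [le_inv_mul_iff₀ hx'] using hle

end MinMod

theorem IsPositivePMap.minMod_le_re_inner {T : H →ₗ.[ℂ] H} (hT : IsPositivePMap T)
    {x : T.domain} (hx : ‖(x : H)‖ = 1) : minMod T ≤ (⟪T x, (x : H)⟫_ℂ).re := by
  obtain ⟨hsa, hpos⟩ := hT
  rcases (minMod_nonneg T).eq_or_lt with hm | hm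
  · exact hm ▸ hpos x
  have hbound : ∀ y : T.domain, ‖(y : H)‖ ≤ (minMod T)⁻¹.toNNReal * ‖T y‖ := fun y => by
    rw [Real.coe_toNNReal _ (inv_nonneg.2 hm.le), le_inv_mul_iff₀ hm]
    exact minMod_mul_norm_le T y
  obtain ⟨w, hw⟩ := hsa.surjective_of_norm_le_mul hbound x
  have hxx : ⟪(x : H), (x : H)⟫_ℂ = 1 := by simp [hx]
  have hwx : ⟪T w, (x : H)⟫_ℂ = 1 := by rw [hw, hxx]
  have hxw : ⟪T x, (w : H)⟫_ℂ = 1 := by rw [hsa.isFormalAdjoint, hw, hxx]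
  have hcs := hsa.isFormalAdjoint.norm_inner_mul_norm_inner_le hpos w x
  rw [hwx, hxw, norm_one, one_mul] at hcs
  have hw_le : minMod T * (⟪T w, (w : H)⟫_ℂ).re ≤ 1 := calc
    minMod T * (⟪T w, (w : H)⟫_ℂ).re ≤ minMod T * ‖(w : H)‖ := by
      gcongr
      simpa [hw, hx] using re_inner_le_norm (𝕜 := ℂ) (x : H) (w : H)
    _ ≤ 1 := by simpa [hw, hx] using minMod_mul_norm_le T w
  calc minMod T ≤ minMod T * ((⟪T w, (w : H)⟫_ℂ).re * (⟪T x, (x : H)⟫_ℂ).re) :=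
        le_mul_of_one_le_right hm.le hcs
    _ = minMod T * (⟪T w, (w : H)⟫_ℂ).re * (⟪T x, (x : H)⟫_ℂ).re := by ring
    _ ≤ (⟪T x, (x : H)⟫_ℂ).re := mul_le_of_le_one_left (hpos x) hw_le

theorem minMod_eq_inf_inner_general (T : H →ₗ.[ℂ] H) (hpos : IsPositivePMap T) :
    minMod T = sInf {r : ℝ | ∃ x : T.domain, ‖(x : H)‖ = 1 ∧ r = (⟪T x, (x : H)⟫_ℂ).re} := by
  rw [sInf_setOf_exists_and_eq]
  rcases isEmpty_or_nonempty {x : T.domain // ‖(x : H)‖ = 1} with hempty | hne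
  · rw [minMod, sInf_setOf_exists_and_eq, Real.iInf_of_isEmpty, Real.iInf_of_isEmpty]
  refine le_antisymm (le_ciInf fun x => hpos.minMod_le_re_inner x.2) ?_
  rw [minMod, sInf_setOf_exists_and_eq]
  refine ciInf_mono ⟨0, ?_⟩ fun x => ?_
  · rintro _ ⟨x, rfl⟩
    exact hpos.2 x
  · simpa [x.2] using re_inner_le_norm (𝕜 := ℂ) (T x) (x : H)

/-- For a densely defined closed positive operator `T`, the minimum modulus `m(T)` equals the
lower numerical bound `m_T = inf {⟨Tx, x⟩ : x ∈ D(T), ‖x‖ = 1}`. -/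
theorem minMod_eq_inf_inner (T : H →ₗ.[ℂ] H) (hdense : Dense (T.domain : Set H))
    (hclosed : T.IsClosed) (hpos : IsPositivePMap T) :
    minMod T = sInf {r : ℝ | ∃ x : T.domain, ‖(x : H)‖ = 1 ∧ r = (⟪T x, (x : H)⟫_ℂ).re} :=
  minMod_eq_inf_inner_general T hpos
end

section
/- Let T be a densely defined closed operator from H1 to H2 that is absolutely minimum attaining. Then the range R(T) of T is closed in H2. -/
/-!
Let `N` be the kernel of `T`; it is closed because the graph of `T` is. If `Nᗮ ≠ 0`, the
absolute minimum attaining property applied to `Nᗮ` yields a unit vector `x₀ ∈ D(T) ∩ Nᗮ` with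
`‖T x₀‖ = m(T|_{Nᗮ})`, and `T x₀ ≠ 0` since `x₀ ∉ N`. Hence `T` is bounded below on `Nᗮ`.
Its restriction to `Nᗮ` is again closed and has the same range as `T`, because `H₁ = N ⊕ Nᗮ`.
Finally, a closed operator between Banach spaces that is bounded below has closed range: the
projection of its complete graph onto the second factor is antilipschitz.
-/

variable {H₁ H₂ : Type*} [NormedAddCommGroup H₁] [InnerProductSpace ℂ H₁] [CompleteSpace H₁]
  [NormedAddCommGroup H₂] [InnerProductSpace ℂ H₂] [CompleteSpace H₂]

/-- The minimum modulus of the restriction of `T` to a set `M`: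
`m(T|_M) = inf {‖Tx‖ : x ∈ D(T) ∩ M, ‖x‖ = 1}`. -/
noncomputable def minModOn (T : H₁ →ₗ.[ℂ] H₂) (M : Set H₁) : ℝ :=
  sInf {r : ℝ | ∃ x : T.domain, (x : H₁) ∈ M ∧ ‖(x : H₁)‖ = 1 ∧ r = ‖T x‖}

/-- `T` is absolutely minimum attaining: the restriction of `T` to every nonzero closed
subspace `M` attains its minimum modulus. -/
def AbsMinAttains (T : H₁ →ₗ.[ℂ] H₂) : Prop :=
  ∀ M : Submodule ℂ H₁, IsClosed (M : Set H₁) → M ≠ ⊥ →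
    ∃ x : T.domain, (x : H₁) ∈ M ∧ ‖(x : H₁)‖ = 1 ∧ ‖T x‖ = minModOn T (M : Set H₁)

namespace LinearPMap

section Ring

variable {R E F : Type*} [Ring R] [AddCommGroup E] [Module R E] [AddCommGroup F] [Module R F]

def ker (T : E →ₗ.[R] F) : Submodule R E :=
  T.graph.comap (LinearMap.inl R E F)

theorem mem_ker_iff {T : E →ₗ.[R] F} {x : E} :
    x ∈ T.ker ↔ ∃ y : T.domain, (y : E) = x ∧ T y = 0 := by
  simp [ker]

theorem range_domRestrict_of_ker_sup_eq_top (T : E →ₗ.[R] F) {S : Submodule R E}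
    (hS : T.ker ⊔ S = ⊤) : Set.range (T.domRestrict S) = Set.range T := by
  refine subset_antisymm ?_ fun _ ⟨x, hx⟩ => ?_
  · rintro _ ⟨x, rfl⟩
    exact ⟨⟨x, x.2.2⟩, (domRestrict_apply rfl).symm⟩
  obtain ⟨k, hk, s, hs, hks⟩ := Submodule.mem_sup.1 (hS.ge (Submodule.mem_top (x := (x : E))))
  obtain ⟨y, rfl, hy⟩ := mem_ker_iff.1 hk
  have hsx : s = ((x - y : T.domain) : E) := by simp [← hks]
  have hsS : s ∈ S ⊓ T.domain := Submodule.mem_inf.2 ⟨hs, hsx ▸ (x - y).2⟩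
  refine ⟨⟨s, hsS⟩, (domRestrict_apply (x := ⟨s, hsS⟩) hsx).trans ?_⟩
  rw [map_sub, hy, sub_zero, hx]

end Ring

section Normed

variable {𝕜 E F : Type*} [NontriviallyNormedField 𝕜] [NormedAddCommGroup E] [NormedSpace 𝕜 E]
  [NormedAddCommGroup F] [NormedSpace 𝕜 F]

theorem IsClosed.isClosed_ker {T : E →ₗ.[𝕜] F} (hT : T.IsClosed) :
    _root_.IsClosed (T.ker : Set E) :=
  _root_.IsClosed.preimage (continuous_id.prodMk continuous_const) hT

theorem IsClosed.domRestrict {T : E →ₗ.[𝕜] F} (hT : T.IsClosed) {S : Submodule 𝕜 E}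
    (hS : _root_.IsClosed (S : Set E)) : (T.domRestrict S).IsClosed := by
  have : ((T.domRestrict S).graph : Set (E × F)) =
      (T.graph : Set (E × F)) ∩ Prod.fst ⁻¹' (S : Set E) := by
    ext ⟨x, y⟩
    simp only [SetLike.mem_coe, mem_graph_iff, Set.mem_inter_iff, Set.mem_preimage]
    constructor
    · rintro ⟨z, rfl, rfl⟩
      exact ⟨⟨⟨z, z.2.2⟩, rfl, (domRestrict_apply rfl).symm⟩, z.2.1⟩
    · rintro ⟨⟨z, rfl, rfl⟩, hz⟩
      exact ⟨⟨z, hz, z.2⟩, rfl, domRestrict_apply rfl⟩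
  change _root_.IsClosed _
  rw [this]
  exact _root_.IsClosed.inter hT (hS.preimage continuous_fst)

theorem IsClosed.isClosed_range_of_mul_norm_le [CompleteSpace E] [CompleteSpace F]
    {T : E →ₗ.[𝕜] F} (hT : T.IsClosed) {c : ℝ} (hc : 0 < c)
    (hbound : ∀ x : T.domain, c * ‖(x : E)‖ ≤ ‖T x‖) : _root_.IsClosed (Set.range T) := by
  have : CompleteSpace T.graph := hT.completeSpace_coe
  let snd : T.graph →L[𝕜] F := (ContinuousLinearMap.snd 𝕜 E F).comp T.graph.subtypeL
  have hrange : Set.range snd = Set.range T := by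
    ext y
    constructor
    · rintro ⟨⟨⟨x, y⟩, hxy⟩, rfl⟩
      obtain ⟨z, -, hz⟩ := (mem_graph_iff T).1 hxy
      exact ⟨z, hz⟩
    · rintro ⟨x, rfl⟩
      exact ⟨⟨_, T.mem_graph x⟩, rfl⟩
  have hanti : AntilipschitzWith (max c⁻¹ 1).toNNReal snd := by
    refine snd.antilipschitz_of_bound fun ⟨p, hp⟩ => ?_
    obtain ⟨z, hz₁, hz₂⟩ := (mem_graph_iff T).1 hp
    have hx : ‖p.1‖ ≤ c⁻¹ * ‖p.2‖ := by
      rw [← hz₁, ← hz₂, le_inv_mul_iff₀ hc]; exact hbound z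
    have : ‖p‖ ≤ max c⁻¹ 1 * ‖p.2‖ :=
      max_le (hx.trans (by gcongr; exact le_max_left _ _))
        (le_mul_of_one_le_left (norm_nonneg _) (le_max_right _ _))
    rwa [Real.coe_toNNReal _ (zero_le_one.trans (le_max_right _ _))]
  exact hrange ▸ hanti.isClosed_range snd.uniformContinuous

end Normed

end LinearPMap

section MinModulus

variable {E F : Type*} [NormedAddCommGroup E] [InnerProductSpace ℂ E] [NormedAddCommGroup F]
  [InnerProductSpace ℂ F]

theorem minModOn_mul_norm_le (T : E →ₗ.[ℂ] F) {M : Submodule ℂ E} {x : T.domain}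
    (hx : (x : E) ∈ M) : minModOn T M * ‖(x : E)‖ ≤ ‖T x‖ := by
  rcases eq_or_ne (x : E) 0 with hx0 | hx0
  · simp [(Submodule.coe_eq_zero.1 hx0 : x = 0)]
  have hnorm : ‖(x : E)‖ ≠ 0 := norm_ne_zero_iff.2 hx0
  set u : T.domain := (‖(x : E)‖⁻¹ : ℂ) • x
  have hu : minModOn T M ≤ ‖T u‖ := by
    refine csInf_le ⟨0, ?_⟩ ⟨u, M.smul_mem _ hx, ?_, rfl⟩
    · rintro _ ⟨_, -, -, rfl⟩
      exact norm_nonneg _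
    · simp [u, norm_smul, hnorm]
  have hTu : ‖T u‖ = ‖(x : E)‖⁻¹ * ‖T x‖ := by
    rw [T.map_smul, norm_smul]
    simp
  rw [hTu, le_inv_mul_iff₀ (norm_pos_iff.2 hx0), mul_comm] at hu
  exact hu

theorem AbsMinAttains.exists_pos_mul_norm_le_of_mem_orthogonal_ker {T : E →ₗ.[ℂ] F}
    (hAM : AbsMinAttains T) :
    ∃ c > 0, ∀ x : T.domain, (x : E) ∈ T.kerᗮ → c * ‖(x : E)‖ ≤ ‖T x‖ := by
  by_cases hbot : T.kerᗮ = ⊥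
  · refine ⟨1, one_pos, fun x hx => ?_⟩
    simp [(Submodule.mem_bot ℂ).1 (hbot ▸ hx)]
  obtain ⟨x₀, hx₀, hx₀_norm, hx₀_min⟩ := hAM _ T.ker.isClosed_orthogonal hbot
  refine ⟨minModOn T T.kerᗮ, hx₀_min ▸ norm_pos_iff.2 fun hTx₀ => ?_,
    fun x hx => minModOn_mul_norm_le T hx⟩
  have hx₀_ker : (x₀ : E) ∈ T.ker := LinearPMap.mem_ker_iff.2 ⟨x₀, rfl, hTx₀⟩
  have : (x₀ : E) = 0 := T.ker.orthogonal_disjoint.le_bot ⟨hx₀_ker, hx₀⟩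
  simp [this] at hx₀_norm

end MinModulus

theorem isClosed_range_of_absMinAttains_general (T : H₁ →ₗ.[ℂ] H₂)
    (hclosed : T.IsClosed) (hAM : AbsMinAttains T) :
    IsClosed (Set.range fun x : T.domain => T x) := by
  have : CompleteSpace T.ker := hclosed.isClosed_ker.completeSpace_coe
  obtain ⟨c, hc, hbound⟩ := hAM.exists_pos_mul_norm_le_of_mem_orthogonal_ker
  rw [← T.range_domRestrict_of_ker_sup_eq_top T.ker.sup_orthogonal_of_hasOrthogonalProjection]
  refine (hclosed.domRestrict T.ker.isClosed_orthogonal).isClosed_range_of_mul_norm_le hc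
    fun x => (hbound ⟨x, x.2.2⟩ x.2.1).trans_eq
      (congrArg norm (LinearPMap.domRestrict_apply rfl).symm)

/-- A densely defined closed absolutely minimum attaining operator has closed range. -/
theorem isClosed_range_of_absMinAttains (T : H₁ →ₗ.[ℂ] H₂)
    (hdense : Dense (T.domain : Set H₁)) (hclosed : T.IsClosed) (hAM : AbsMinAttains T) :
    IsClosed (Set.range fun x : T.domain => T x) :=
  isClosed_range_of_absMinAttains_general T hclosed hAM
end

section
/- Let T be a bounded positive operator on a complex Hilbert space H such that T is invertible with bounded inverse T⁻¹ ∈ B(H). Then T is absolutely minimum attaining if and only if T⁻¹ is absolutely norm attaining. -/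
variable {H : Type*} [NormedAddCommGroup H] [InnerProductSpace ℂ H] [CompleteSpace H]

/-- The minimum modulus of the restriction of a bounded operator `T` to a set `M`:
`m(T|_M) = inf {‖Tx‖ : x ∈ M, ‖x‖ = 1}`. -/
noncomputable def minModOnCLM (T : H →L[ℂ] H) (M : Set H) : ℝ :=
  sInf {r : ℝ | ∃ x ∈ M, ‖x‖ = 1 ∧ r = ‖T x‖}

/-- The norm of the restriction of a bounded operator `T` to a set `M`:
`sup {‖Tx‖ : x ∈ M, ‖x‖ = 1}`. -/
noncomputable def normOnCLM (T : H →L[ℂ] H) (M : Set H) : ℝ :=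
  sSup {r : ℝ | ∃ x ∈ M, ‖x‖ = 1 ∧ r = ‖T x‖}

/-- A bounded operator `T` is absolutely minimum attaining: the restriction of `T` to every
nonzero closed subspace attains its minimum modulus. -/
def AbsMinAttainsCLM (T : H →L[ℂ] H) : Prop :=
  ∀ M : Submodule ℂ H, IsClosed (M : Set H) → M ≠ ⊥ →
    ∃ x ∈ M, ‖x‖ = 1 ∧ ‖T x‖ = minModOnCLM T (M : Set H)

/-- A bounded operator `S` is absolutely norm attaining: its restriction to every nonzero
closed subspace attains the norm of the restriction. -/
def AbsNormAttainsCLM (S : H →L[ℂ] H) : Prop :=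
  ∀ M : Submodule ℂ H, IsClosed (M : Set H) → M ≠ ⊥ →
    ∃ x ∈ M, ‖x‖ = 1 ∧ ‖S x‖ = normOnCLM S (M : Set H)

/-- Supremum of the set of inverses of a set of reals bounded below by a positive constant. -/
lemma aux_sSup_inv {S : Set ℝ} (hne : S.Nonempty) {c : ℝ} (hc : 0 < c)
    (hcS : ∀ r ∈ S, c ≤ r) : sSup (Inv.inv '' S) = (sInf S)⁻¹ := by
  have hbdd : BddBelow S := ⟨c, hcS⟩
  have hInfpos : 0 < sInf S := lt_of_lt_of_le hc (le_csInf hne hcS)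
  have hbdd' : BddAbove (Inv.inv '' S) := by
    refine ⟨c⁻¹, ?_⟩
    rintro _ ⟨r, hr, rfl⟩
    exact inv_anti₀ hc (hcS r hr)
  apply le_antisymm
  · apply csSup_le (hne.image _)
    rintro _ ⟨r, hr, rfl⟩
    exact inv_anti₀ hInfpos (csInf_le hbdd hr)
  · have ⟨r0, hr0⟩ := hne
    have hr0pos : 0 < r0 := lt_of_lt_of_le hc (hcS r0 hr0)
    have hsupPos : 0 < sSup (Inv.inv '' S) :=
      lt_of_lt_of_le (inv_pos.mpr hr0pos) (le_csSup hbdd' ⟨r0, hr0, rfl⟩)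
    have key : (sSup (Inv.inv '' S))⁻¹ ≤ sInf S := by
      apply le_csInf hne
      intro r hr
      have h1 : r⁻¹ ≤ sSup (Inv.inv '' S) := le_csSup hbdd' ⟨r, hr, rfl⟩
      have hrpos : 0 < r := lt_of_lt_of_le hc (hcS r hr)
      calc (sSup (Inv.inv '' S))⁻¹ ≤ (r⁻¹)⁻¹ := inv_anti₀ (inv_pos.mpr hrpos) h1
        _ = r := inv_inv r
    calc (sInf S)⁻¹ ≤ ((sSup (Inv.inv '' S))⁻¹)⁻¹ := inv_anti₀ (inv_pos.mpr hsupPos) key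
      _ = sSup (Inv.inv '' S) := inv_inv _

/-- The norm-set of `Tinv` on `T(M)` is the set of inverses of the norm-set of `T` on `M`. -/
lemma aux_set_eq (T Tinv : H →L[ℂ] H)
    (h₁ : ∀ x, Tinv (T x) = x) (h₂ : ∀ y, T (Tinv y) = y) (M : Submodule ℂ H) :
    {r : ℝ | ∃ y ∈ Submodule.map (T : H →ₗ[ℂ] H) M, ‖y‖ = 1 ∧ r = ‖Tinv y‖} =
      Inv.inv '' {r : ℝ | ∃ x ∈ M, ‖x‖ = 1 ∧ r = ‖T x‖} := by
  ext r
  constructor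
  · rintro ⟨y, hyM, hy1, rfl⟩
    obtain ⟨x0, hx0M, hx0⟩ := hyM
    simp only [ContinuousLinearMap.coe_coe] at hx0
    have hx0' : Tinv y = x0 := by rw [← hx0, h₁]
    have hy0 : y ≠ 0 := by intro h; rw [h, norm_zero] at hy1; norm_num at hy1
    have hx0ne : x0 ≠ 0 := by intro h; rw [h, map_zero] at hx0; exact hy0 hx0.symm
    have hn : ‖x0‖ ≠ 0 := norm_ne_zero_iff.mpr hx0ne
    refine ⟨‖T ((‖x0‖⁻¹ : ℂ) • x0)‖, ⟨(‖x0‖⁻¹ : ℂ) • x0, M.smul_mem _ hx0M, ?_, rfl⟩, ?_⟩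
    · simp [norm_smul, abs_of_nonneg, inv_mul_cancel₀ hn]
    · have : T ((‖x0‖⁻¹ : ℂ) • x0) = (‖x0‖⁻¹ : ℂ) • y := by rw [map_smul, hx0]
      rw [this, norm_smul, hy1, hx0']
      simp [hn]
  · rintro ⟨r, ⟨x, hxM, hx1, rfl⟩, rfl⟩
    have hxne : x ≠ 0 := by intro h; rw [h, norm_zero] at hx1; norm_num at hx1
    have hTx : T x ≠ 0 := by
      intro h
      have := h₁ x
      rw [h, map_zero] at this
      exact hxne this.symm
    have hn : ‖T x‖ ≠ 0 := norm_ne_zero_iff.mpr hTx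
    refine ⟨(‖T x‖⁻¹ : ℂ) • T x, Submodule.smul_mem _ _ ⟨x, hxM, rfl⟩, ?_, ?_⟩
    · simp [norm_smul, inv_mul_cancel₀ hn]
    · rw [map_smul, h₁, norm_smul, hx1]
      simp

/-- The image of a closed subspace under an invertible operator is closed. -/
lemma aux_map_closed (T Tinv : H →L[ℂ] H)
    (h₁ : ∀ x, Tinv (T x) = x) (h₂ : ∀ y, T (Tinv y) = y) (M : Submodule ℂ H)
    (hM : IsClosed (M : Set H)) :
    IsClosed ((Submodule.map (T : H →ₗ[ℂ] H) M : Submodule ℂ H) : Set H) := by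
  have : ((Submodule.map (T : H →ₗ[ℂ] H) M : Submodule ℂ H) : Set H) = Tinv ⁻¹' (M : Set H) := by
    ext y
    constructor
    · rintro ⟨x, hx, rfl⟩
      simpa [h₁ x] using hx
    · intro hy
      exact ⟨Tinv y, hy, h₂ y⟩
  rw [this]
  exact hM.preimage Tinv.continuous

/-- The image of a nonzero subspace under an injective operator is nonzero. -/
lemma aux_map_ne_bot (T Tinv : H →L[ℂ] H)
    (h₁ : ∀ x, Tinv (T x) = x) (M : Submodule ℂ H) (hM : M ≠ ⊥) :
    Submodule.map (T : H →ₗ[ℂ] H) M ≠ ⊥ := by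
  obtain ⟨x, hxM, hx⟩ := Submodule.exists_mem_ne_zero_of_ne_bot hM
  intro h
  have hTx : T x ∈ Submodule.map (T : H →ₗ[ℂ] H) M := ⟨x, hxM, rfl⟩
  rw [h, Submodule.mem_bot] at hTx
  apply hx
  rw [← h₁ x, hTx, map_zero]

/-- Key computation: `‖Tinv‖ on T(M)` equals `(m(T|M))⁻¹`, and `m(T|M) > 0`. -/
lemma aux_key (T Tinv : H →L[ℂ] H)
    (h₁ : ∀ x, Tinv (T x) = x) (h₂ : ∀ y, T (Tinv y) = y)
    (M : Submodule ℂ H) (hM : M ≠ ⊥) :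
    normOnCLM Tinv ((Submodule.map (T : H →ₗ[ℂ] H) M : Submodule ℂ H) : Set H)
        = (minModOnCLM T (M : Set H))⁻¹ ∧ 0 < minModOnCLM T (M : Set H) := by
  obtain ⟨x1, hx1M, hx1⟩ := Submodule.exists_mem_ne_zero_of_ne_bot hM
  have hTinvne : Tinv ≠ 0 := by
    intro h
    apply hx1
    rw [← h₁ x1, h]
    simp
  have hTinvpos : 0 < ‖Tinv‖ := norm_pos_iff.mpr hTinvne
  set S : Set ℝ := {r : ℝ | ∃ x ∈ (M : Set H), ‖x‖ = 1 ∧ r = ‖T x‖} with hS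
  have hne : S.Nonempty := by
    have hn : ‖x1‖ ≠ 0 := norm_ne_zero_iff.mpr hx1
    refine ⟨‖T ((‖x1‖⁻¹ : ℂ) • x1)‖, (‖x1‖⁻¹ : ℂ) • x1, M.smul_mem _ hx1M, ?_, rfl⟩
    simp [norm_smul, inv_mul_cancel₀ hn]
  have hcS : ∀ r ∈ S, ‖Tinv‖⁻¹ ≤ r := by
    rintro _ ⟨x, hxM, hx1', rfl⟩
    have h := Tinv.le_opNorm (T x)
    rw [h₁, hx1'] at h
    rw [inv_le_iff_one_le_mul₀ hTinvpos]
    linarith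
  have hpos : 0 < minModOnCLM T (M : Set H) := by
    have : ‖Tinv‖⁻¹ ≤ sInf S := le_csInf hne hcS
    have h2 : 0 < ‖Tinv‖⁻¹ := inv_pos.mpr hTinvpos
    exact lt_of_lt_of_le h2 this
  refine ⟨?_, hpos⟩
  unfold normOnCLM minModOnCLM
  rw [show {r : ℝ | ∃ y ∈ ((Submodule.map (T : H →ₗ[ℂ] H) M : Submodule ℂ H) : Set H),
        ‖y‖ = 1 ∧ r = ‖Tinv y‖} =
      Inv.inv '' {r : ℝ | ∃ x ∈ (M : Set H), ‖x‖ = 1 ∧ r = ‖T x‖} from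
    aux_set_eq T Tinv h₁ h₂ M]
  exact aux_sSup_inv hne (inv_pos.mpr hTinvpos) hcS

/-- A bounded positive invertible operator `T` is absolutely minimum attaining iff its
inverse is absolutely norm attaining. -/
theorem absMinAttains_iff_inv_absNormAttains_bounded (T : H →L[ℂ] H)
    (hpos : T.IsPositive) (Tinv : H →L[ℂ] H)
    (h₁ : Tinv.comp T = ContinuousLinearMap.id ℂ H)
    (h₂ : T.comp Tinv = ContinuousLinearMap.id ℂ H) :
    AbsMinAttainsCLM T ↔ AbsNormAttainsCLM Tinv := by
  have h₁' : ∀ x, Tinv (T x) = x := fun x => congrFun (congrArg DFunLike.coe h₁) x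
  have h₂' : ∀ y, T (Tinv y) = y := fun y => congrFun (congrArg DFunLike.coe h₂) y
  constructor
  · -- AM T → AN Tinv
    intro hAM N hNcl hNne
    set M : Submodule ℂ H := Submodule.map (Tinv : H →ₗ[ℂ] H) N with hMdef
    have hMcl : IsClosed (M : Set H) := aux_map_closed Tinv T h₂' h₁' N hNcl
    have hMne : M ≠ ⊥ := aux_map_ne_bot Tinv T h₂' N hNne
    have hmap : Submodule.map (T : H →ₗ[ℂ] H) M = N := by
      ext y
      constructor
      · rintro ⟨x, hx, rfl⟩
        obtain ⟨z, hz, rfl⟩ := hx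
        simpa [h₂' z] using hz
      · intro hy
        exact ⟨Tinv y, ⟨y, hy, rfl⟩, h₂' y⟩
    obtain ⟨hkey, hposmin⟩ := aux_key T Tinv h₁' h₂' M hMne
    obtain ⟨x, hxM, hx1, hxmin⟩ := hAM M hMcl hMne
    have hTx : T x ≠ 0 := by
      intro h
      have := h₁' x
      rw [h, map_zero] at this
      rw [← this, norm_zero] at hx1
      norm_num at hx1
    have hn : ‖T x‖ ≠ 0 := norm_ne_zero_iff.mpr hTx
    refine ⟨(‖T x‖⁻¹ : ℂ) • T x, ?_, ?_, ?_⟩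
    · exact N.smul_mem _ (hmap ▸ (⟨x, hxM, rfl⟩ : T x ∈ Submodule.map (T : H →ₗ[ℂ] H) M))
    · simp [norm_smul, inv_mul_cancel₀ hn]
    · rw [map_smul, h₁', norm_smul, hx1]
      rw [← hmap] at *
      rw [hkey, ← hxmin]
      simp
  · -- AN Tinv → AM T
    intro hAN M hMcl hMne
    set N : Submodule ℂ H := Submodule.map (T : H →ₗ[ℂ] H) M with hNdef
    have hNcl : IsClosed (N : Set H) := aux_map_closed T Tinv h₁' h₂' M hMcl
    have hNne : N ≠ ⊥ := aux_map_ne_bot T Tinv h₁' M hMne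
    obtain ⟨hkey, hposmin⟩ := aux_key T Tinv h₁' h₂' M hMne
    obtain ⟨y, hyN, hy1, hymax⟩ := hAN N hNcl hNne
    obtain ⟨x0, hx0M, hx0⟩ := hyN
    simp only [ContinuousLinearMap.coe_coe] at hx0
    have hx0' : Tinv y = x0 := by rw [← hx0, h₁']
    have hy0 : y ≠ 0 := by intro h; rw [h, norm_zero] at hy1; norm_num at hy1
    have hx0ne : x0 ≠ 0 := by intro h; rw [h, map_zero] at hx0; exact hy0 hx0.symm
    have hn : ‖x0‖ ≠ 0 := norm_ne_zero_iff.mpr hx0ne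
    have hTinvy : ‖Tinv y‖ = (minModOnCLM T (M : Set H))⁻¹ := by
      rw [hymax, hNdef, hkey]
    refine ⟨(‖x0‖⁻¹ : ℂ) • x0, M.smul_mem _ hx0M, ?_, ?_⟩
    · simp [norm_smul, inv_mul_cancel₀ hn]
    · have hTval : T ((‖x0‖⁻¹ : ℂ) • x0) = (‖x0‖⁻¹ : ℂ) • y := by rw [map_smul, hx0]
      rw [hTval, norm_smul, hy1]
      have : ‖x0‖ = (minModOnCLM T (M : Set H))⁻¹ := by rw [← hx0', hTinvy]
      rw [this]
      simp [ne_of_gt hposmin, le_of_lt hposmin]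
end
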